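/- arXiv:2210.04931 — 9 statements merged into one kernel-verified Lean document; each statement's English description precedes it below -/
import Mathlib

section
/- V(G) ≤ λ^{-2} · (2e^ρ(1 + γ_s²)(e^ρ − 1 − ρ) − (e^ρ − 1)²). (This is the upper bound in formula (1.3).) -/
/-!
With `p = 1 - G` and `h t = ∫_t^∞ p`, Tonelli gives `∫_0^∞ h = μ₂ / 2`, so the bound
reduces to `∫_0^∞ (e^{λ h} - 1) ≤ λ φ(λ α) ∫_0^∞ h` with `φ z = 2 (eᶻ - 1 - z) / z²`;
scaling `p` we may take `λ = 1`. The function `h` is convex with right derivative `-p`,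
so it lies above its tangent lines, which gives `h t ² ≤ 2 p t ∫_t^∞ h`. As `φ` is
nondecreasing, this makes `t ↦ φ (h t) ∫_t^∞ h - ∫_t^∞ (e^h - 1)` nonincreasing while
`h > 0`; it is bounded below by `-∫_t^∞ (e^h - 1)`, which tends to `0` at the first zero
of `h` (or at `∞`).
-/

open MeasureTheory Real Set Filter Topology

noncomputable def tailIntegral (f : ℝ → ℝ) (t : ℝ) : ℝ := ∫ v in Ioi t, f v

section TailIntegral

variable {f : ℝ → ℝ} {a x : ℝ}

theorem tailIntegral_nonneg (hf_nonneg : ∀ v, 0 ≤ f v) (t : ℝ) : 0 ≤ tailIntegral f t :=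
  setIntegral_nonneg measurableSet_Ioi fun v _ => hf_nonneg v

theorem tailIntegral_const_mul (c : ℝ) (f : ℝ → ℝ) :
    tailIntegral (fun v => c * f v) = fun t => c * tailIntegral f t :=
  funext fun _ => integral_const_mul c _

theorem antitoneOn_tailIntegral (hf_nonneg : ∀ v, 0 ≤ f v) (hf : IntegrableOn f (Ioi a)) :
    AntitoneOn (tailIntegral f) (Ici a) := fun _ hs _ _ hst =>
  setIntegral_mono_set (hf.mono_set (Ioi_subset_Ioi hs)) (ae_of_all _ fun v => hf_nonneg v)
    (Ioi_subset_Ioi hst).eventuallyLE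

theorem tailIntegral_eq_sub (hloc : ∀ a b, IntervalIntegrable f volume a b)
    (hf : IntegrableOn f (Ioi a)) (t : ℝ) :
    tailIntegral f t = tailIntegral f a - ∫ v in a..t, f v := by
  rw [tailIntegral, tailIntegral, ← intervalIntegral.integral_interval_add_Ioi' (hloc t a) hf,
    intervalIntegral.integral_symm]
  ring

theorem continuous_tailIntegral (hloc : ∀ a b, IntervalIntegrable f volume a b)
    (hf : IntegrableOn f (Ioi a)) : Continuous (tailIntegral f) := by
  rw [funext (tailIntegral_eq_sub hloc hf)]
  exact continuous_const.sub (intervalIntegral.continuous_primitive hloc a)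

theorem hasDerivWithinAt_tailIntegral (hloc : ∀ a b, IntervalIntegrable f volume a b)
    (hf : IntegrableOn f (Ioi x)) (hfx : ContinuousWithinAt f (Ioi x) x) :
    HasDerivWithinAt (tailIntegral f) (-f x) (Ici x) x := by
  rw [funext (tailIntegral_eq_sub hloc hf)]
  exact (intervalIntegral.integral_hasDerivWithinAt_right (hloc x x)
    (AEStronglyMeasurable.stronglyMeasurableAtFilter_of_mem hf.aestronglyMeasurable
      self_mem_nhdsWithin) hfx).const_sub _

theorem lintegral_ofReal_tailIntegral (hf_nonneg : ∀ v, 0 ≤ f v) (hf : IntegrableOn f (Ioi 0)) :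
    ∫⁻ t in Ioi 0, ENNReal.ofReal (tailIntegral f t) =
      ∫⁻ v in Ioi 0, ENNReal.ofReal (v * f v) := by
  set ν := (volume.restrict (Ioi (0 : ℝ))).withDensity fun v => ENNReal.ofReal (f v)
  have hν : ∀ t, 0 ≤ t → ν {v | t < v} = ENNReal.ofReal (tailIntegral f t) := fun t ht => by
    change ν (Ioi t) = _
    rw [withDensity_apply _ measurableSet_Ioi, Measure.restrict_restrict measurableSet_Ioi,
      Ioi_inter_Ioi, sup_of_le_left ht, tailIntegral, ofReal_integral_eq_lintegral_ofReal
        (hf.mono_set (Ioi_subset_Ioi ht)) (ae_of_all _ fun v => hf_nonneg v)]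
  calc ∫⁻ t in Ioi 0, ENNReal.ofReal (tailIntegral f t)
      = ∫⁻ t in Ioi 0, ν {v | t < v} :=
        setLIntegral_congr_fun measurableSet_Ioi fun t ht => (hν t ht.le).symm
    _ = ∫⁻ v, ENNReal.ofReal v ∂ν :=
        (lintegral_eq_lintegral_meas_lt ν ((withDensity_absolutelyContinuous _ _).ae_le
          (ae_restrict_of_forall_mem measurableSet_Ioi fun v hv => le_of_lt hv))
          aemeasurable_id).symm
    _ = ∫⁻ v in Ioi 0, ENNReal.ofReal (f v) * ENNReal.ofReal v :=
        lintegral_withDensity_eq_lintegral_mul₀' hf.aemeasurable.ennreal_ofReal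
          measurable_id.ennreal_ofReal.aemeasurable
    _ = ∫⁻ v in Ioi 0, ENNReal.ofReal (v * f v) := by
        simp_rw [← ENNReal.ofReal_mul (hf_nonneg _), mul_comm]

theorem integrableOn_tailIntegral (hf_nonneg : ∀ v, 0 ≤ f v) (hf : IntegrableOn f (Ioi 0))
    (hf_mul : IntegrableOn (fun v => v * f v) (Ioi 0)) :
    IntegrableOn (tailIntegral f) (Ioi 0) := by
  refine ⟨(aemeasurable_restrict_of_antitoneOn measurableSet_Ioi
    ((antitoneOn_tailIntegral hf_nonneg hf).mono Ioi_subset_Ici_self)).aestronglyMeasurable, ?_⟩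
  rw [hasFiniteIntegral_iff_ofReal (ae_of_all _ (tailIntegral_nonneg hf_nonneg)),
    lintegral_ofReal_tailIntegral hf_nonneg hf]
  exact hf_mul.lintegral_lt_top

theorem integral_tailIntegral (hf_nonneg : ∀ v, 0 ≤ f v) (hf : IntegrableOn f (Ioi 0))
    (hf_mul : IntegrableOn (fun v => v * f v) (Ioi 0)) :
    ∫ t in Ioi 0, tailIntegral f t = ∫ v in Ioi 0, v * f v := by
  rw [integral_eq_lintegral_of_nonneg_ae (ae_of_all _ (tailIntegral_nonneg hf_nonneg))
      (integrableOn_tailIntegral hf_nonneg hf hf_mul).aestronglyMeasurable,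
    lintegral_ofReal_tailIntegral hf_nonneg hf, integral_eq_lintegral_of_nonneg_ae
      (ae_restrict_of_forall_mem measurableSet_Ioi fun v hv =>
        mul_nonneg (le_of_lt hv) (hf_nonneg v)) hf_mul.aestronglyMeasurable]

end TailIntegral

section Convexity

variable {p : ℝ → ℝ} {x : ℝ}

theorem tailIntegral_sub_mul_le (hp_anti : Antitone p) (hp : IntegrableOn p (Ioi x)) {s : ℝ}
    (hxs : x ≤ s) : tailIntegral p x - (s - x) * p x ≤ tailIntegral p s := by
  have hdiff := intervalIntegral.integral_Ioi_sub_Ioi hp hxs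
  have hle : ∫ v in x..s, p v ≤ ∫ _ in x..s, p x :=
    intervalIntegral.integral_mono_on hxs hp_anti.intervalIntegrable intervalIntegrable_const
      fun v hv => hp_anti hv.1
  rw [intervalIntegral.integral_const, smul_eq_mul] at hle
  rw [tailIntegral, tailIntegral]
  linarith

theorem sq_tailIntegral_le (hp_anti : Antitone p) (hp_nonneg : ∀ v, 0 ≤ p v)
    (hp : IntegrableOn p (Ioi x)) (hh : IntegrableOn (tailIntegral p) (Ioi x)) :
    tailIntegral p x ^ 2 ≤ 2 * p x * tailIntegral (tailIntegral p) x := by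
  set h := tailIntegral p
  rcases (hp_nonneg x).eq_or_lt with hpx | hpx
  · have hhx : h x = 0 := setIntegral_eq_zero_of_forall_eq_zero fun v hv =>
      le_antisymm (hpx ▸ hp_anti (le_of_lt hv)) (hp_nonneg v)
    simp [hhx, ← hpx]
  set T := h x / p x
  have hT : x ≤ x + T :=
    le_add_of_nonneg_right (div_nonneg (tailIntegral_nonneg hp_nonneg x) hpx.le)
  have h_tangent : ∫ s in x..x + T, (h x - (s - x) * p x) = h x ^ 2 / (2 * p x) := by
    rw [intervalIntegral.integral_comp_sub_right (fun u => h x - u * p x), add_sub_cancel_left,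
      sub_self, intervalIntegral.integral_sub intervalIntegrable_const
        ((continuous_mul_const (p x)).intervalIntegrable _ _),
      intervalIntegral.integral_mul_const, integral_id, intervalIntegral.integral_const,
      smul_eq_mul]
    simp only [T]
    field_simp
    ring
  have h_le_tail : ∫ s in x..x + T, h s ≤ tailIntegral h x := by
    rw [intervalIntegral.integral_of_le hT]
    exact setIntegral_mono_set hh (ae_of_all _ fun v => tailIntegral_nonneg hp_nonneg v)
      Ioc_subset_Ioi_self.eventuallyLE
  have h_mono : ∫ s in x..x + T, (h x - (s - x) * p x) ≤ ∫ s in x..x + T, h s :=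
    intervalIntegral.integral_mono_on hT
      ((by fun_prop : Continuous fun s => h x - (s - x) * p x).intervalIntegrable _ _)
      ((intervalIntegrable_iff_integrableOn_Ioc_of_le hT).2 (hh.mono_set Ioc_subset_Ioi_self))
      fun s hs => tailIntegral_sub_mul_le hp_anti hp hs.1
  have := h_tangent ▸ h_mono.trans h_le_tail
  rw [div_le_iff₀ (by positivity)] at this
  linarith

end Convexity

theorem sub_one_mul_exp_add_one_nonneg (z : ℝ) : 0 ≤ (z - 1) * exp z + 1 := by
  have h := mul_le_mul_of_nonneg_right (add_one_le_exp (-z)) (exp_pos z).le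
  rw [← exp_add, neg_add_cancel, exp_zero] at h
  linarith

theorem sub_two_mul_exp_add_add_two_nonneg {z : ℝ} (hz : 0 ≤ z) :
    0 ≤ (z - 2) * exp z + z + 2 := by
  have hmono : Monotone fun y => (y - 2) * exp y + y + 2 :=
    monotone_of_hasDerivAt_nonneg (f' := fun y => (y - 1) * exp y + 1)
      (fun y => ((((hasDerivAt_id y).sub_const 2).mul (hasDerivAt_exp y)).add
        (hasDerivAt_id y)).add_const 2 |>.congr_deriv (by simp; ring))
      sub_one_mul_exp_add_one_nonneg
  simpa using hmono hz

/-- `φ z = 2 (eᶻ - 1 - z) / z²` is `∫ (e^h - 1) / ∫ h` for `h` decreasing linearly from `z` to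
`0` (deterministic service), the extremal case of the bound. -/
noncomputable def expRemainderQuot (z : ℝ) : ℝ := 2 * (exp z - 1 - z) / z ^ 2

theorem expRemainderQuot_nonneg (z : ℝ) : 0 ≤ expRemainderQuot z :=
  div_nonneg (by linarith [add_one_le_exp z]) (sq_nonneg z)

theorem hasDerivAt_expRemainderQuot {z : ℝ} (hz : z ≠ 0) :
    HasDerivAt expRemainderQuot (2 * ((z - 2) * exp z + z + 2) / z ^ 3) z := by
  refine ((((hasDerivAt_exp z).sub_const 1).sub (hasDerivAt_id' z)).const_mul 2).div
    (hasDerivAt_pow 2 z) (pow_ne_zero 2 hz) |>.congr_deriv ?_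
  simp only [Pi.sub_apply]
  field_simp
  ring

theorem expRemainderQuot_comp_mul_sub_le {p h B J : ℝ → ℝ} {a b : ℝ} (hab : a ≤ b)
    (hh : ContinuousOn h (Icc a b)) (hB : ContinuousOn B (Icc a b))
    (hJ : ContinuousOn J (Icc a b))
    (hh' : ∀ x ∈ Ico a b, HasDerivWithinAt h (-p x) (Ici x) x)
    (hB' : ∀ x ∈ Ico a b, HasDerivWithinAt B (-h x) (Ici x) x)
    (hJ' : ∀ x ∈ Ico a b, HasDerivWithinAt J (-(exp (h x) - 1)) (Ici x) x)
    (hpos : ∀ x ∈ Icc a b, 0 < h x) (hsq : ∀ x ∈ Ico a b, h x ^ 2 ≤ 2 * p x * B x) :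
    expRemainderQuot (h b) * B b - J b ≤ expRemainderQuot (h a) * B a - J a := by
  have hφ (x) (hx : x ∈ Icc a b) := hasDerivAt_expRemainderQuot (hpos x hx).ne'
  have hφh : ContinuousOn (fun t => expRemainderQuot (h t)) (Icc a b) := fun x hx =>
    (hφ x hx).continuousAt.comp_continuousWithinAt (hh x hx)
  have hW : ContinuousOn (fun t => expRemainderQuot (h t) * B t - J t) (Icc a b) :=
    (hφh.mul hB).sub hJ
  have hW' (x) (hx : x ∈ Ico a b) :
      HasDerivWithinAt (fun t => expRemainderQuot (h t) * B t - J t)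
        (2 * ((h x - 2) * exp (h x) + h x + 2) / h x ^ 3 * (h x ^ 2 / 2 - p x * B x)) (Ici x) x := by
    -- the derivative factors through `φ' z * z² / 2 = eᶻ - 1 - φ z * z`
    refine (((hφ x (Ico_subset_Icc_self hx)).comp_hasDerivWithinAt x (hh' x hx)).mul
      (hB' x hx)).sub (hJ' x hx) |>.congr_deriv ?_
    have := (hpos x (Ico_subset_Icc_self hx)).ne'
    simp only [Function.comp_apply, expRemainderQuot]
    field_simp
    ring
  refine image_le_of_deriv_right_le_deriv_boundary hW hW' le_rfl continuousOn_const
    (fun x _ => hasDerivWithinAt_const x _ _) (fun x hx => ?_) (right_mem_Icc.2 hab)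
  have hx_pos := hpos x (Ico_subset_Icc_self hx)
  exact mul_nonpos_of_nonneg_of_nonpos
    (div_nonneg (by linarith [sub_two_mul_exp_add_add_two_nonneg hx_pos.le]) (by positivity))
    (by linarith [hsq x hx])

theorem nonneg_of_forall_ne_zero_neg_le {h J : ℝ → ℝ} {c : ℝ} (hh : Continuous h)
    (hh0 : h 0 ≠ 0) (hJ : Continuous J) (hJ_top : Tendsto J atTop (𝓝 0))
    (hJ_zero : ∀ t, 0 ≤ t → h t = 0 → J t = 0) (hle : ∀ b, 0 ≤ b → h b ≠ 0 → -J b ≤ c) :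
    0 ≤ c := by
  by_cases hZ : ∃ t, 0 ≤ t ∧ h t = 0
  · set Z := {t | 0 ≤ t ∧ h t = 0}
    have hZ_bdd : BddBelow Z := ⟨0, fun _ ht => ht.1⟩
    have hT : sInf Z ∈ Z :=
      (isClosed_Ici.inter (isClosed_singleton.preimage hh)).csInf_mem hZ hZ_bdd
    have hT_pos : 0 < sInf Z := hT.1.lt_of_ne fun h0 => hh0 (h0 ▸ hT.2)
    have hsub : Ico 0 (sInf Z) ⊆ {b | -J b ≤ c} := fun b hb =>
      hle b hb.1 fun hb0 => (csInf_le hZ_bdd ⟨hb.1, hb0⟩).not_gt hb.2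
    have hT_le := closure_minimal hsub (isClosed_le hJ.neg continuous_const)
      (closure_Ico hT_pos.ne ▸ right_mem_Icc.2 hT.1)
    simpa [hJ_zero _ hT.1 hT.2] using hT_le
  · push Not at hZ
    exact le_of_tendsto (by simpa using hJ_top.neg)
      ((eventually_ge_atTop 0).mono fun b hb => hle b hb (hZ b hb))

theorem integral_exp_tailIntegral_sub_one_le {p : ℝ → ℝ} (hp_anti : Antitone p)
    (hp_nonneg : ∀ v, 0 ≤ p v) (hp_rc : ∀ v, ContinuousWithinAt p (Ici v) v)
    (hp : IntegrableOn p (Ioi 0)) (hh : IntegrableOn (tailIntegral p) (Ioi 0))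
    (hh0 : 0 < tailIntegral p 0) :
    ∫ t in Ioi 0, (exp (tailIntegral p t) - 1) ≤
      expRemainderQuot (tailIntegral p 0) * ∫ t in Ioi 0, tailIntegral p t := by
  set h := tailIntegral p
  set ψ := fun t => exp (h t) - 1
  have hp_loc (a b : ℝ) : IntervalIntegrable p volume a b := hp_anti.intervalIntegrable
  have hh_cont : Continuous h := continuous_tailIntegral hp_loc hp
  have hh_nonneg : ∀ t, 0 ≤ h t := tailIntegral_nonneg hp_nonneg
  have hh_anti : AntitoneOn h (Ici 0) := antitoneOn_tailIntegral hp_nonneg hp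
  have hψ_cont : Continuous ψ := hh_cont.rexp.sub continuous_const
  have hψ : IntegrableOn ψ (Ioi 0) := by
    refine (hh.const_mul (exp (h 0))).mono' hψ_cont.aestronglyMeasurable.restrict
      (ae_restrict_of_forall_mem measurableSet_Ioi fun t ht => ?_)
    have h_exp :=
      exp_le_exp.2 (hh_anti (mem_Ici.2 le_rfl) (mem_Ici.2 (le_of_lt ht)) (le_of_lt ht))
    rw [norm_of_nonneg (by linarith [add_one_le_exp (h t), hh_nonneg t])]
    nlinarith [sub_one_mul_exp_add_one_nonneg (h t), hh_nonneg t]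
  have hB_cont := continuous_tailIntegral (fun a b => hh_cont.intervalIntegrable a b) hh
  have hJ_cont := continuous_tailIntegral (fun a b => hψ_cont.intervalIntegrable a b) hψ
  have h_decr (b : ℝ) (hb : 0 ≤ b) (hhb : 0 < h b) :
      expRemainderQuot (h b) * tailIntegral h b - tailIntegral ψ b ≤
        expRemainderQuot (h 0) * tailIntegral h 0 - tailIntegral ψ 0 :=
    expRemainderQuot_comp_mul_sub_le hb hh_cont.continuousOn hB_cont.continuousOn
      hJ_cont.continuousOn
      (fun x hx => hasDerivWithinAt_tailIntegral hp_loc (hp.mono_set (Ioi_subset_Ioi hx.1))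
        ((hp_rc x).mono Ioi_subset_Ici_self))
      (fun x hx => hasDerivWithinAt_tailIntegral (fun a b => hh_cont.intervalIntegrable a b)
        (hh.mono_set (Ioi_subset_Ioi hx.1)) hh_cont.continuousWithinAt)
      (fun x hx => hasDerivWithinAt_tailIntegral (fun a b => hψ_cont.intervalIntegrable a b)
        (hψ.mono_set (Ioi_subset_Ioi hx.1)) hψ_cont.continuousWithinAt)
      (fun x hx => hhb.trans_le (hh_anti hx.1 hb hx.2))
      (fun x hx => sq_tailIntegral_le hp_anti hp_nonneg (hp.mono_set (Ioi_subset_Ioi hx.1))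
        (hh.mono_set (Ioi_subset_Ioi hx.1)))
  have hψ_zero (t : ℝ) (ht : 0 ≤ t) (hht : h t = 0) : tailIntegral ψ t = 0 :=
    setIntegral_eq_zero_of_forall_eq_zero fun s hs => by
      have : h s = 0 := le_antisymm (hht ▸ hh_anti ht (ht.trans (le_of_lt hs)) (le_of_lt hs))
        (hh_nonneg s)
      simp [ψ, this]
  have h_lim := nonneg_of_forall_ne_zero_neg_le
    (c := expRemainderQuot (h 0) * tailIntegral h 0 - tailIntegral ψ 0) hh_cont hh0.ne' hJ_cont
    (tendsto_integral_Ioi_zero tendsto_id) hψ_zero fun b hb hhb => by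
      have := mul_nonneg (expRemainderQuot_nonneg (h b)) (tailIntegral_nonneg hh_nonneg b)
      linarith [h_decr b hb ((hh_nonneg b).lt_of_ne' hhb)]
  exact sub_nonneg.1 h_lim

theorem integral_exp_mul_tailIntegral_sub_one_le {p : ℝ → ℝ} {c : ℝ} (hc : 0 < c)
    (hp_anti : Antitone p) (hp_nonneg : ∀ v, 0 ≤ p v)
    (hp_rc : ∀ v, ContinuousWithinAt p (Ici v) v) (hp : IntegrableOn p (Ioi 0))
    (hh : IntegrableOn (tailIntegral p) (Ioi 0)) (hh0 : 0 < tailIntegral p 0) :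
    ∫ t in Ioi 0, (exp (c * tailIntegral p t) - 1) ≤
      c * expRemainderQuot (c * tailIntegral p 0) * ∫ t in Ioi 0, tailIntegral p t := by
  have := integral_exp_tailIntegral_sub_one_le (p := fun v => c * p v)
    (fun _ _ hab => mul_le_mul_of_nonneg_left (hp_anti hab) hc.le)
    (fun v => mul_nonneg hc.le (hp_nonneg v)) (fun v => (hp_rc v).const_mul c) (hp.const_mul c)
    (by rw [tailIntegral_const_mul]; exact hh.const_mul c)
    (by rw [tailIntegral_const_mul]; exact mul_pos hc hh0)
  rw [tailIntegral_const_mul, integral_const_mul] at this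
  linarith

theorem mg_infty_busy_period_variance_upper_bound_general
    (G : ℝ → ℝ)
    (hmono : Monotone G)
    (hrc : ∀ v : ℝ, ContinuousWithinAt G (Set.Ici v) v)
    (hlim : Tendsto G atTop (nhds 1))
    (lam α μ₂ ρ σ2 γ2 : ℝ)
    (hlam : 0 < lam)
    (hInt1 : IntegrableOn (fun v => 1 - G v) (Ioi 0))
    (hα : α = ∫ v in Ioi (0:ℝ), (1 - G v))
    (hαpos : 0 < α)
    (hInt2 : IntegrableOn (fun v => v * (1 - G v)) (Ioi 0))
    (hμ₂ : μ₂ = 2 * ∫ v in Ioi (0:ℝ), v * (1 - G v))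
    (hρ : ρ = lam * α)
    (hσ : σ2 = μ₂ - α ^ 2)
    (hγ : γ2 = σ2 / α ^ 2) :
    (2 * exp ρ / lam) * (∫ t in Ioi (0:ℝ), (exp (lam * ∫ v in Ioi t, (1 - G v)) - 1))
        - ((exp ρ - 1) / lam) ^ 2
      ≤ lam⁻¹ ^ 2 * (2 * exp ρ * (1 + γ2) * (exp ρ - 1 - ρ) - (exp ρ - 1) ^ 2) := by
  have hp_nonneg (v : ℝ) : 0 ≤ 1 - G v := sub_nonneg.2 (hmono.ge_of_tendsto hlim v)
  have h_int := integral_exp_mul_tailIntegral_sub_one_le hlam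
    (fun _ _ hab => sub_le_sub_left (hmono hab) 1) hp_nonneg
    (fun v => continuousWithinAt_const.sub (hrc v)) hInt1
    (integrableOn_tailIntegral hp_nonneg hInt1 hInt2) (by rwa [tailIntegral, ← hα])
  rw [integral_tailIntegral hp_nonneg hInt1 hInt2, tailIntegral, ← hα, ← hρ] at h_int
  have h_rhs : lam⁻¹ ^ 2 * (2 * exp ρ * (1 + γ2) * (exp ρ - 1 - ρ) - (exp ρ - 1) ^ 2) =
      2 * exp ρ / lam * (lam * expRemainderQuot ρ * (μ₂ / 2)) - ((exp ρ - 1) / lam) ^ 2 := by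
    rw [hγ, hσ, expRemainderQuot, hρ]
    field_simp
    ring
  rw [h_rhs, hμ₂, mul_div_cancel_left₀ _ two_ne_zero]
  gcongr
  exact h_int

/-- Upper bound of formula (1.3): the M/G/∞ busy period variance satisfies
`V(G) ≤ λ⁻² (2 e^ρ (1 + γ_s²)(e^ρ - 1 - ρ) - (e^ρ - 1)²)`. -/
theorem mg_infty_busy_period_variance_upper_bound
    (G : ℝ → ℝ)
    (hmono : Monotone G)
    (hrc : ∀ v : ℝ, ContinuousWithinAt G (Set.Ici v) v)
    (hneg : ∀ v : ℝ, v < 0 → G v = 0)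
    (hlim : Tendsto G atTop (nhds 1))
    (lam α μ₂ ρ σ2 γ2 : ℝ)
    (hlam : 0 < lam)
    (hInt1 : IntegrableOn (fun v => 1 - G v) (Ioi 0))
    (hα : α = ∫ v in Ioi (0:ℝ), (1 - G v))
    (hαpos : 0 < α)
    (hInt2 : IntegrableOn (fun v => v * (1 - G v)) (Ioi 0))
    (hμ₂ : μ₂ = 2 * ∫ v in Ioi (0:ℝ), v * (1 - G v))
    (hρ : ρ = lam * α)
    (hσ : σ2 = μ₂ - α ^ 2)
    (hγ : γ2 = σ2 / α ^ 2) :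
    (2 * exp ρ / lam) * (∫ t in Ioi (0:ℝ), (exp (lam * ∫ v in Ioi t, (1 - G v)) - 1))
        - ((exp ρ - 1) / lam) ^ 2
      ≤ lam⁻¹ ^ 2 * (2 * exp ρ * (1 + γ2) * (exp ρ - 1 - ρ) - (exp ρ - 1) ^ 2) :=
  mg_infty_busy_period_variance_upper_bound_general G hmono hrc hlim lam α μ₂ ρ σ2 γ2 hlam hInt1 hα
    hαpos hInt2 hμ₂ hρ hσ hγ
end

section
/- V(G) ≥ λ^{-2} · (e^{2ρ} + e^ρ ρ² γ_s² − 2ρe^ρ − 1). (This is the lower bound in formula (1.3); since e^{2ρ} − 2ρe^ρ − 1 ≥ 0, this bound is automatically nonnegative.) -/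
open MeasureTheory Real Set Filter
open scoped ENNReal

/-! With `h` the integrated tail, Tonelli gives `∫₀^∞ h = μ₂ / 2`, so
`∫ (e^{λh} - 1) = λ μ₂ / 2 + ∫ g(λh)` where `g x = eˣ - 1 - x`. Since the tail `1 - G` is at most
`1`, `h t ≥ α - t` on `[0, α]`; as `g` is nonnegative and increasing on `[0, ∞)`,
`∫ g(λh) ≥ ∫₀^α g(λ(α - t)) dt = (e^ρ - 1)/λ - α - λα²/2`, and the bound is this inequality
rearranged. -/

theorem lintegral_Ioi_lintegral_Ioi {F : ℝ → ℝ≥0∞} (hF : Measurable F) (a : ℝ) :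
    ∫⁻ t in Ioi a, ∫⁻ v in Ioi t, F v = ∫⁻ v in Ioi a, ENNReal.ofReal (v - a) * F v := by
  calc ∫⁻ t in Ioi a, ∫⁻ v in Ioi t, F v
      = ∫⁻ t in Ioi a, ∫⁻ v in Ioi a, (Ioi t).indicator F v := by
        refine setLIntegral_congr_fun measurableSet_Ioi fun t ht => ?_
        rw [lintegral_indicator measurableSet_Ioi, Measure.restrict_restrict measurableSet_Ioi,
          Ioi_inter_Ioi, max_eq_left ht.le]
    _ = ∫⁻ v in Ioi a, ∫⁻ t in Ioi a, (Iio v).indicator (fun _ => F v) t := by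
        rw [lintegral_lintegral_swap]
        · simp only [indicator_apply, mem_Ioi, mem_Iio]
        · exact (Measurable.ite (measurableSet_lt measurable_fst measurable_snd)
            (hF.comp measurable_snd) measurable_const).aemeasurable
    _ = ∫⁻ v in Ioi a, ENNReal.ofReal (v - a) * F v := by
        refine setLIntegral_congr_fun measurableSet_Ioi fun v hv => ?_
        rw [lintegral_indicator measurableSet_Iio, Measure.restrict_restrict measurableSet_Iio,
          setLIntegral_const, Iio_inter_Ioi, Real.volume_Ioo, mul_comm]

theorem MeasureTheory.IntegrableOn.Ioi_of_norm_le {E : Type*} [NormedAddCommGroup E]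
    {f : ℝ → E} {a M : ℝ} (hf : IntegrableOn f (Ioi a)) (hfm : AEStronglyMeasurable f)
    (hM : ∀ v, ‖f v‖ ≤ M) (t : ℝ) :
    IntegrableOn f (Ioi t) :=
  ((Measure.integrableOn_of_bounded (s := Ioc t a) measure_Ioc_lt_top.ne hfm (M := M)
    (.of_forall hM)).union hf).mono_set Ioi_subset_Ioc_union_Ioi

theorem Monotone.mem_Icc_zero_one {G : ℝ → ℝ} (hmono : Monotone G)
    (hneg : ∀ v < 0, G v = 0) (hlim : Tendsto G atTop (nhds 1)) (v : ℝ) : G v ∈ Icc 0 1 :=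
  ⟨(hneg (min v (-1)) (by simp)).symm.le.trans (hmono (min_le_left _ _)),
    hmono.ge_of_tendsto hlim v⟩

section TailIntegral

variable {f : ℝ → ℝ}

theorem antitone_integral_Ioi (hf0 : ∀ v, 0 ≤ f v) (hf : ∀ t, IntegrableOn f (Ioi t)) :
    Antitone fun t => ∫ v in Ioi t, f v := fun _ _ hst =>
  setIntegral_mono_set (hf _) (.of_forall fun v => hf0 v) (Ioi_subset_Ioi hst).eventuallyLE

theorem lintegral_ofReal_integral_Ioi (hf0 : ∀ v, 0 ≤ f v) (hfm : Measurable f)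
    (hf : ∀ t, IntegrableOn f (Ioi t)) (a : ℝ) :
    ∫⁻ t in Ioi a, ENNReal.ofReal (∫ v in Ioi t, f v)
      = ∫⁻ v in Ioi a, ENNReal.ofReal ((v - a) * f v) := by
  have htail (t : ℝ) : ENNReal.ofReal (∫ v in Ioi t, f v) = ∫⁻ v in Ioi t, ENNReal.ofReal (f v) :=
    ofReal_integral_eq_lintegral_ofReal (hf t) (.of_forall hf0)
  simp_rw [htail, lintegral_Ioi_lintegral_Ioi hfm.ennreal_ofReal]
  refine setLIntegral_congr_fun measurableSet_Ioi fun v hv => ?_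
  rw [ENNReal.ofReal_mul (sub_nonneg.2 (le_of_lt hv))]

theorem integrableOn_integral_Ioi (hf0 : ∀ v, 0 ≤ f v) (hfm : Measurable f)
    (hf : ∀ t, IntegrableOn f (Ioi t)) {a : ℝ}
    (hf' : IntegrableOn (fun v => (v - a) * f v) (Ioi a)) :
    IntegrableOn (fun t => ∫ v in Ioi t, f v) (Ioi a) := by
  refine ⟨(antitone_integral_Ioi hf0 hf).measurable.aestronglyMeasurable, ?_⟩
  rw [hasFiniteIntegral_iff_ofReal (.of_forall fun t => setIntegral_nonneg measurableSet_Ioi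
    fun v _ => hf0 v), lintegral_ofReal_integral_Ioi hf0 hfm hf]
  exact hf'.lintegral_lt_top

theorem integral_Ioi_integral_Ioi (hf0 : ∀ v, 0 ≤ f v) (hfm : Measurable f)
    (hf : ∀ t, IntegrableOn f (Ioi t)) (a : ℝ) :
    ∫ t in Ioi a, ∫ v in Ioi t, f v = ∫ v in Ioi a, (v - a) * f v := by
  rw [integral_eq_lintegral_of_nonneg_ae (.of_forall fun t => setIntegral_nonneg measurableSet_Ioi
      fun v _ => hf0 v) (antitone_integral_Ioi hf0 hf).measurable.aestronglyMeasurable,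
    integral_eq_lintegral_of_nonneg_ae ((ae_restrict_iff' measurableSet_Ioi).2 (.of_forall
      fun v hv => mul_nonneg (sub_nonneg.2 (le_of_lt hv)) (hf0 v)))
      (by fun_prop : Measurable fun v => (v - a) * f v).aestronglyMeasurable,
    lintegral_ofReal_integral_Ioi hf0 hfm hf]

theorem integral_Ioi_le_integral_Ioi_add (hf1 : ∀ v, f v ≤ 1) {a t : ℝ}
    (hf : IntegrableOn f (Ioi a)) (hat : a ≤ t) :
    ∫ v in Ioi a, f v ≤ (∫ v in Ioi t, f v) + (t - a) := by
  have hmid : ∫ v in a..t, f v ≤ t - a := by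
    simpa using intervalIntegral.integral_mono_on hat
      ((intervalIntegrable_iff_integrableOn_Ioc_of_le hat).2 (hf.mono_set Ioc_subset_Ioi_self))
      intervalIntegrable_const fun v _ => hf1 v
  rw [← intervalIntegral.integral_Ioi_sub_Ioi hf hat] at hmid
  linarith

end TailIntegral

theorem Real.exp_sub_one_le_mul_exp (x : ℝ) : exp x - 1 ≤ x * exp x := by
  have h := mul_le_mul_of_nonneg_left (one_sub_le_exp_neg x) (exp_pos x).le
  rw [← exp_add, add_neg_cancel, exp_zero] at h
  linarith

theorem Real.monotoneOn_exp_sub_one_sub : MonotoneOn (fun x => exp x - 1 - x) (Ici 0) := by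
  intro x hx y _ hxy
  have hstep : exp x * (y - x + 1) ≤ exp y := by
    simpa [← exp_add] using mul_le_mul_of_nonneg_left (add_one_le_exp (y - x)) (exp_pos x).le
  have hone : 1 ≤ exp x := one_le_exp hx
  dsimp only
  nlinarith

theorem Real.exp_sub_one_sub_nonneg {x : ℝ} (hx : 0 ≤ x) : 0 ≤ exp x - 1 - x := by
  simpa using monotoneOn_exp_sub_one_sub self_mem_Ici hx hx

theorem integral_exp_mul_sub_one_sub (c α : ℝ) (hc : c ≠ 0) :
    ∫ t in (0:ℝ)..α, (exp (c * (α - t)) - 1 - c * (α - t))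
      = (exp (c * α) - 1) / c - α - c * α ^ 2 / 2 := by
  rw [intervalIntegral.integral_comp_sub_left (fun s => exp (c * s) - 1 - c * s), sub_self,
    sub_zero, intervalIntegral.integral_sub, intervalIntegral.integral_sub,
    intervalIntegral.integral_comp_mul_left (fun x => exp x) hc,
    intervalIntegral.integral_const_mul]
  · simp only [mul_zero, integral_exp, exp_zero, integral_id, intervalIntegral.integral_const,
      smul_eq_mul]
    field_simp
    ring
  all_goals exact Continuous.intervalIntegrable (by fun_prop) _ _

theorem MeasureTheory.Integrable.exp_mul_sub_one {ι : Type*} [MeasurableSpace ι] {μ : Measure ι}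
    {h : ι → ℝ} {c M : ℝ} (hc : 0 ≤ c) (hh : Integrable h μ) (hbd : ∀ᵐ t ∂μ, 0 ≤ h t ∧ h t ≤ M) :
    Integrable (fun t => exp (c * h t) - 1) μ := by
  refine (hh.const_mul (c * exp (c * M))).mono'
    ((continuous_exp.comp_aestronglyMeasurable (hh.1.const_mul c)).sub
      aestronglyMeasurable_const) ?_
  filter_upwards [hbd] with t ⟨h0, hM⟩
  have hx : 0 ≤ c * h t := mul_nonneg hc h0
  rw [norm_of_nonneg (sub_nonneg.2 (one_le_exp hx))]
  calc exp (c * h t) - 1 ≤ c * h t * exp (c * h t) := exp_sub_one_le_mul_exp _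
    _ ≤ c * h t * exp (c * M) := by gcongr
    _ = c * exp (c * M) * h t := by ring

theorem le_integral_exp_mul_sub_one {h : ℝ → ℝ} {c α : ℝ} (hc : 0 < c) (hα : 0 ≤ α)
    (hh : IntegrableOn h (Ioi 0)) (hexp : IntegrableOn (fun t => exp (c * h t) - 1) (Ioi 0))
    (h0 : ∀ t ∈ Ioi 0, 0 ≤ h t) (hαh : ∀ t ∈ Ioc 0 α, α - t ≤ h t) :
    c * (∫ t in Ioi 0, h t) + ((exp (c * α) - 1) / c - α - c * α ^ 2 / 2)
      ≤ ∫ t in Ioi 0, (exp (c * h t) - 1) := by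
  set g : ℝ → ℝ := fun x => exp x - 1 - x
  have hg : IntegrableOn (fun t => g (c * h t)) (Ioi 0) := hexp.sub (hh.const_mul c)
  have hsplit : ∫ t in Ioi 0, (exp (c * h t) - 1)
      = c * (∫ t in Ioi 0, h t) + ∫ t in Ioi 0, g (c * h t) := by
    rw [← integral_const_mul, ← integral_add (hh.const_mul c) hg]
    simp [g]
  have hcmp : ∫ t in Ioc 0 α, g (c * (α - t)) ≤ ∫ t in Ioi 0, g (c * h t) :=
    calc ∫ t in Ioc 0 α, g (c * (α - t)) ≤ ∫ t in Ioc 0 α, g (c * h t) := by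
          refine setIntegral_mono_on ?_ (hg.mono_set Ioc_subset_Ioi_self) measurableSet_Ioc
            fun t ht => monotoneOn_exp_sub_one_sub ?_ ?_ ?_
          · exact (Continuous.integrableOn_Ioc (by fun_prop))
          · exact mul_nonneg hc.le (sub_nonneg.2 ht.2)
          · exact mul_nonneg hc.le (h0 t ht.1)
          · exact mul_le_mul_of_nonneg_left (hαh t ht) hc.le
      _ ≤ ∫ t in Ioi 0, g (c * h t) := by
          refine setIntegral_mono_set hg ((ae_restrict_iff' measurableSet_Ioi).2
            (.of_forall fun t ht => exp_sub_one_sub_nonneg (mul_nonneg hc.le (h0 t ht))))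
            Ioc_subset_Ioi_self.eventuallyLE
  rw [← intervalIntegral.integral_of_le hα, integral_exp_mul_sub_one_sub c α hc.ne'] at hcmp
  linarith

theorem mg_infty_busy_period_variance_lower_bound_general
    (G : ℝ → ℝ)
    (hmono : Monotone G)
    (hneg : ∀ v : ℝ, v < 0 → G v = 0)
    (hlim : Tendsto G atTop (nhds 1))
    (lam α μ₂ ρ σ2 γ2 : ℝ)
    (hlam : 0 < lam)
    (hInt1 : IntegrableOn (fun v => 1 - G v) (Ioi 0))
    (hα : α = ∫ v in Ioi (0:ℝ), (1 - G v))
    (hαpos : 0 < α)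
    (hInt2 : IntegrableOn (fun v => v * (1 - G v)) (Ioi 0))
    (hμ₂ : μ₂ = 2 * ∫ v in Ioi (0:ℝ), v * (1 - G v))
    (hρ : ρ = lam * α)
    (hσ : σ2 = μ₂ - α ^ 2)
    (hγ : γ2 = σ2 / α ^ 2) :
    lam⁻¹ ^ 2 * (exp (2 * ρ) + exp ρ * ρ ^ 2 * γ2 - 2 * ρ * exp ρ - 1)
      ≤ (2 * exp ρ / lam) * (∫ t in Ioi (0:ℝ), (exp (lam * ∫ v in Ioi t, (1 - G v)) - 1))
        - ((exp ρ - 1) / lam) ^ 2 := by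
  have hG := hmono.mem_Icc_zero_one hneg hlim
  set f : ℝ → ℝ := fun v => 1 - G v
  have hf0 (v : ℝ) : 0 ≤ f v := sub_nonneg.2 (hG v).2
  have hf1 (v : ℝ) : f v ≤ 1 := sub_le_self 1 (hG v).1
  have hfm : Measurable f := measurable_const.sub hmono.measurable
  have hf : ∀ t, IntegrableOn f (Ioi t) := hInt1.Ioi_of_norm_le hfm.aestronglyMeasurable
    (M := 1) fun v => by rw [norm_of_nonneg (hf0 v)]; exact hf1 v
  set h : ℝ → ℝ := fun t => ∫ v in Ioi t, f v
  have hh0 (t : ℝ) : 0 ≤ h t := setIntegral_nonneg measurableSet_Ioi fun v _ => hf0 v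
  have hhα : ∀ t ∈ Ioi (0:ℝ), h t ≤ α := fun t ht => hα ▸ antitone_integral_Ioi hf0 hf ht.le
  have hh : IntegrableOn h (Ioi 0) :=
    integrableOn_integral_Ioi hf0 hfm hf (by simpa only [sub_zero] using hInt2)
  have hhμ₂ : ∫ t in Ioi 0, h t = μ₂ / 2 := by
    rw [integral_Ioi_integral_Ioi hf0 hfm hf, hμ₂]
    simp only [sub_zero]
    ring
  have hexp : IntegrableOn (fun t => exp (lam * h t) - 1) (Ioi 0) :=
    hh.exp_mul_sub_one hlam.le ((ae_restrict_iff' measurableSet_Ioi).2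
      (.of_forall fun t ht => ⟨hh0 t, hhα t ht⟩))
  have hlow := le_integral_exp_mul_sub_one hlam hαpos.le hh hexp (fun t _ => hh0 t)
    fun t ht => by linarith [hα ▸ integral_Ioi_le_integral_Ioi_add hf1 hInt1 ht.1.le]
  rw [hhμ₂, ← hρ] at hlow
  calc lam⁻¹ ^ 2 * (exp (2 * ρ) + exp ρ * ρ ^ 2 * γ2 - 2 * ρ * exp ρ - 1)
      = 2 * exp ρ / lam * (lam * (μ₂ / 2) + ((exp ρ - 1) / lam - α - lam * α ^ 2 / 2))
        - ((exp ρ - 1) / lam) ^ 2 := by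
        rw [hγ, hσ, hρ, two_mul, exp_add]
        field_simp
        ring
    _ ≤ _ := by gcongr

/-- Lower bound of formula (1.3): the M/G/∞ busy period variance satisfies
`V(G) ≥ λ⁻² (e^{2ρ} + e^ρ ρ² γ_s² - 2ρ e^ρ - 1)`. -/
theorem mg_infty_busy_period_variance_lower_bound
    (G : ℝ → ℝ)
    (hmono : Monotone G)
    (hrc : ∀ v : ℝ, ContinuousWithinAt G (Set.Ici v) v)
    (hneg : ∀ v : ℝ, v < 0 → G v = 0)
    (hlim : Tendsto G atTop (nhds 1))
    (lam α μ₂ ρ σ2 γ2 : ℝ)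
    (hlam : 0 < lam)
    (hInt1 : IntegrableOn (fun v => 1 - G v) (Ioi 0))
    (hα : α = ∫ v in Ioi (0:ℝ), (1 - G v))
    (hαpos : 0 < α)
    (hInt2 : IntegrableOn (fun v => v * (1 - G v)) (Ioi 0))
    (hμ₂ : μ₂ = 2 * ∫ v in Ioi (0:ℝ), v * (1 - G v))
    (hρ : ρ = lam * α)
    (hσ : σ2 = μ₂ - α ^ 2)
    (hγ : γ2 = σ2 / α ^ 2) :
    lam⁻¹ ^ 2 * (exp (2 * ρ) + exp ρ * ρ ^ 2 * γ2 - 2 * ρ * exp ρ - 1)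
      ≤ (2 * exp ρ / lam) * (∫ t in Ioi (0:ℝ), (exp (lam * ∫ v in Ioi t, (1 - G v)) - 1))
        - ((exp ρ - 1) / lam) ^ 2 :=
  mg_infty_busy_period_variance_lower_bound_general G hmono hneg hlim lam α μ₂ ρ σ2 γ2 hlam hInt1 hα
    hαpos hInt2 hμ₂ hρ hσ hγ
end

section
/- For all α > 0 and ρ > 0, ∫₀^∞ (e^{ρ e^{−t/α}} − 1) dt = α ∑_{n=1}^∞ ρⁿ/(n·n!). (The busy period variance integral for exponential service times, underlying formula (1.4).) -/
/-!
Writing `u = e^{-t/α}`, the integrand is `e^{ρu} - 1 = ∑_{n ≥ 1} ρⁿ/n! · e^{-nt/α}`. The `n`-th term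
integrates to `αρⁿ/(n·n!)` over `(0, ∞)`, and the integral commutes with the sum because the
integrals of the absolute values of the terms are summable.
-/

open MeasureTheory Real Set Nat

lemma hasSum_pow_succ_div_factorial (x : ℝ) :
    HasSum (fun n : ℕ ↦ x ^ (n + 1) / (n + 1)!) (exp x - 1) := by
  have h := (hasSum_nat_add_iff' 1).mpr (NormedSpace.expSeries_div_hasSum_exp x)
  simpa [← Real.exp_eq_exp_ℝ] using h

lemma integral_exp_neg_mul_Ioi_zero {b : ℝ} (hb : 0 < b) :
    ∫ t in Ioi (0:ℝ), exp (-b * t) = 1 / b := by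
  simpa [div_neg, neg_div] using integral_exp_mul_Ioi (neg_neg_of_pos hb) 0

lemma hasSum_integral_Ioi_of_hasSum_mul_exp_neg_mul {ι : Type*} [Countable ι] {a p : ι → ℝ}
    {F : ℝ → ℝ} (hp : ∀ i, 0 < p i)
    (hF : ∀ t ∈ Ioi (0:ℝ), HasSum (fun i ↦ a i * exp (-p i * t)) (F t))
    (h_sum : Summable fun i ↦ ‖a i‖ / p i) :
    HasSum (fun i ↦ a i / p i) (∫ t in Ioi 0, F t) := by
  have h_term (c : ℝ) (i : ι) : ∫ t in Ioi (0:ℝ), c * exp (-p i * t) = c / p i := by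
    rw [integral_const_mul, integral_exp_neg_mul_Ioi_zero (hp i), mul_one_div]
  rw [setIntegral_congr_fun measurableSet_Ioi fun t ht ↦ (hF t ht).tsum_eq.symm]
  refine (hasSum_integral_of_summable_integral_norm
    (fun i ↦ (exp_neg_integrableOn_Ioi 0 (hp i)).const_mul (a i)) ?_).congr_fun fun i ↦ ?_
  · simpa only [norm_mul, norm_of_nonneg (exp_pos _).le, h_term] using h_sum
  · exact (h_term (a i) i).symm

theorem mm_infty_busy_period_integral_general
    (α ρ : ℝ) (hα : 0 < α) :
    ∫ t in Ioi (0:ℝ), (exp (ρ * exp (-t / α)) - 1)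
      = α * ∑' n : ℕ, ρ ^ (n + 1) / (((n : ℝ) + 1) * (Nat.factorial (n + 1))) := by
  have hp (n : ℕ) : 0 < ((n : ℝ) + 1) / α := by positivity
  have hF : ∀ t ∈ Ioi (0:ℝ),
      HasSum (fun n : ℕ ↦ ρ ^ (n + 1) / (n + 1)! * exp (-(((n : ℝ) + 1) / α) * t))
        (exp (ρ * exp (-t / α)) - 1) := by
    intro t _
    convert hasSum_pow_succ_div_factorial (ρ * exp (-t / α)) using 2 with n
    rw [mul_pow, ← exp_nat_mul]
    push_cast
    ring_nf
  have h_sum : Summable fun n : ℕ ↦ ‖ρ ^ (n + 1) / (n + 1)!‖ / (((n : ℝ) + 1) / α) := by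
    refine .of_nonneg_of_le (fun n ↦ by positivity) (fun n ↦ ?_)
      ((hasSum_pow_succ_div_factorial ρ).summable.abs.mul_left α)
    rw [div_div_eq_mul_div, mul_comm, norm_eq_abs]
    exact div_le_self (by positivity) (by linarith [n.cast_nonneg (α := ℝ)])
  rw [← (hasSum_integral_Ioi_of_hasSum_mul_exp_neg_mul hp hF h_sum).tsum_eq, ← tsum_mul_left]
  congr 1 with n
  field_simp

/-- The busy period variance integral for exponential service times:
for `α > 0` and `ρ > 0`, `∫₀^∞ (e^{ρ e^{-t/α}} - 1) dt = α ∑_{n=1}^∞ ρⁿ/(n·n!)`. -/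
theorem mm_infty_busy_period_integral
    (α ρ : ℝ) (hα : 0 < α) (hρ : 0 < ρ) :
    ∫ t in Ioi (0:ℝ), (exp (ρ * exp (-t / α)) - 1)
      = α * ∑' n : ℕ, ρ ^ (n + 1) / (((n : ℝ) + 1) * (Nat.factorial (n + 1))) :=
  mm_infty_busy_period_integral_general α ρ hα
end

section
/- If G(v) = 1 − e^{−v/α} for v ≥ 0 (exponential service times with mean α), so that h(t) = α e^{−t/α}, then V(G) = (2e^ρ(1 + ρ ∑_{n=1}^∞ ρⁿ/(n·n!)) − e^{2ρ} − 1)/λ². (This is formula (1.4), the M/M/∞ busy period variance.) -/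
/-!
For exponential service times the integrated tail is `h(t) = α e^{-t/α}`, so the integral in
`V(G)` is `∫₀^∞ (exp (ρ e^{-t/α}) - 1) dt`. Expanding the exponential, the `n`-th term
`ρⁿ/n! · e^{-nt/α}` integrates to `α ρⁿ/(n · n!)`; the series of integrals of absolute values
converges, so sum and integral may be exchanged, and the formula is then pure algebra.
-/

open MeasureTheory Real Set Filter
open scoped Nat

lemma hasSum_pow_succ_div_factorial_exp_sub_one (x : ℝ) :
    HasSum (fun n : ℕ => x ^ (n + 1) / (n + 1)!) (exp x - 1) := by
  have h := (hasSum_nat_add_iff' 1).mpr (NormedSpace.expSeries_div_hasSum_exp x)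
  simpa [← Real.exp_eq_exp_ℝ] using h

lemma integrableOn_exp_neg_div_Ioi {α : ℝ} (hα : 0 < α) (c : ℝ) :
    IntegrableOn (fun t => exp (-t / α)) (Ioi c) := by
  convert integrableOn_exp_mul_Ioi (neg_lt_zero.2 (inv_pos.2 hα)) c using 3
  ring

lemma integral_exp_neg_div_Ioi {α : ℝ} (hα : 0 < α) (c : ℝ) :
    ∫ t in Ioi c, exp (-t / α) = α * exp (-c / α) := by
  have := integral_exp_mul_Ioi (neg_lt_zero.2 (inv_pos.2 hα)) c
  simp only [neg_mul, ← neg_div, inv_mul_eq_div] at this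
  rw [this]
  field_simp

lemma exp_neg_div_pow (α t : ℝ) (n : ℕ) :
    exp (-t / α) ^ n = exp (-t / (α / n)) := by
  rw [← exp_nat_mul]
  congr 1
  rcases eq_or_ne (n : ℝ) 0 with h | h
  · simp [h]
  · field_simp

lemma integrableOn_exp_neg_div_pow_succ_Ioi {α : ℝ} (hα : 0 < α) (n : ℕ) (c : ℝ) :
    IntegrableOn (fun t => exp (-t / α) ^ (n + 1)) (Ioi c) := by
  simp_rw [exp_neg_div_pow]
  exact integrableOn_exp_neg_div_Ioi (by positivity) c

lemma integral_exp_neg_div_pow_succ_Ioi_zero {α : ℝ} (hα : 0 < α) (n : ℕ) :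
    ∫ t in Ioi 0, exp (-t / α) ^ (n + 1) = α / (n + 1) := by
  simp_rw [exp_neg_div_pow, integral_exp_neg_div_Ioi (by positivity : 0 < α / (n + 1 : ℕ))]
  simp

lemma integral_exp_mul_exp_neg_div_sub_one_Ioi (ρ : ℝ) {α : ℝ} (hα : 0 < α) :
    ∫ t in Ioi 0, (exp (ρ * exp (-t / α)) - 1)
      = α * ∑' n : ℕ, ρ ^ (n + 1) / ((n + 1) * (n + 1)!) := by
  set a : ℕ → ℝ := fun n => ρ ^ (n + 1) / (n + 1)!
  set F : ℕ → ℝ → ℝ := fun n t => a n * exp (-t / α) ^ (n + 1)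
  have hF_int : ∀ n, IntegrableOn (F n) (Ioi 0) :=
    fun n => (integrableOn_exp_neg_div_pow_succ_Ioi hα n 0).const_mul (a n)
  have hF_norm : ∀ n, ∫ t in Ioi 0, ‖F n t‖ = |a n| * (α / (n + 1)) := fun n => by
    simp only [F, norm_mul, norm_pow, Real.norm_eq_abs, abs_exp, integral_const_mul,
      integral_exp_neg_div_pow_succ_Ioi_zero hα]
  have hF_sum : Summable fun n => ∫ t in Ioi 0, ‖F n t‖ := by
    simp_rw [hF_norm]
    refine Summable.of_nonneg_of_le (fun n => by positivity) (fun n => ?_)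
      ((hasSum_pow_succ_div_factorial_exp_sub_one ρ).summable.abs.mul_right α)
    gcongr
    exact div_le_self hα.le (by linarith [n.cast_nonneg (α := ℝ)])
  calc ∫ t in Ioi 0, (exp (ρ * exp (-t / α)) - 1) = ∫ t in Ioi 0, ∑' n, F n t := by
        congr 1; ext t
        rw [← (hasSum_pow_succ_div_factorial_exp_sub_one _).tsum_eq]
        simp only [F, a, mul_pow, mul_div_right_comm]
    _ = ∑' n, ∫ t in Ioi 0, F n t := (integral_tsum_of_summable_integral_norm hF_int hF_sum).symm
    _ = α * ∑' n : ℕ, ρ ^ (n + 1) / ((n + 1) * (n + 1)!) := by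
        rw [← tsum_mul_left]
        congr 1; ext n
        simp only [F, a, integral_const_mul, integral_exp_neg_div_pow_succ_Ioi_zero hα]
        field_simp

theorem mm_infty_busy_period_variance_general
    (G : ℝ → ℝ)
    (lam α ρ : ℝ)
    (hlam : 0 < lam)
    (hα : 0 < α)
    (hρ : ρ = lam * α)
    (hG : ∀ v : ℝ, 0 ≤ v → G v = 1 - exp (-v / α)) :
    (2 * exp ρ / lam) * (∫ t in Ioi (0:ℝ), (exp (lam * ∫ v in Ioi t, (1 - G v)) - 1))
        - ((exp ρ - 1) / lam) ^ 2
      = (2 * exp ρ * (1 + ρ * ∑' n : ℕ, ρ ^ (n + 1) / (((n : ℝ) + 1) * (Nat.factorial (n + 1))))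
          - exp (2 * ρ) - 1) / lam ^ 2 := by
  have h_tail : ∀ t ∈ Ioi (0:ℝ), lam * ∫ v in Ioi t, (1 - G v) = ρ * exp (-t / α) := by
    intro t ht
    rw [hρ, mul_assoc, ← integral_exp_neg_div_Ioi hα t]
    congr 1
    refine setIntegral_congr_fun measurableSet_Ioi fun v hv => ?_
    rw [hG v (ht.out.trans hv).le, sub_sub_cancel]
  rw [setIntegral_congr_fun measurableSet_Ioi fun t ht => by rw [h_tail t ht],
    integral_exp_mul_exp_neg_div_sub_one_Ioi ρ hα, two_mul ρ, exp_add, hρ]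
  field_simp
  ring

/-- Formula (1.4): for exponential service times with mean `α`, the M/M/∞ busy period
variance equals `(2e^ρ(1 + ρ ∑_{n=1}^∞ ρⁿ/(n·n!)) - e^{2ρ} - 1)/λ²`. -/
theorem mm_infty_busy_period_variance
    (G : ℝ → ℝ)
    (lam α ρ : ℝ)
    (hlam : 0 < lam)
    (hα : 0 < α)
    (hρ : ρ = lam * α)
    (hG : ∀ v : ℝ, 0 ≤ v → G v = 1 - exp (-v / α))
    (hGneg : ∀ v : ℝ, v < 0 → G v = 0) :
    (2 * exp ρ / lam) * (∫ t in Ioi (0:ℝ), (exp (lam * ∫ v in Ioi t, (1 - G v)) - 1))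
        - ((exp ρ - 1) / lam) ^ 2
      = (2 * exp ρ * (1 + ρ * ∑' n : ℕ, ρ ^ (n + 1) / (((n : ℝ) + 1) * (Nat.factorial (n + 1))))
          - exp (2 * ρ) - 1) / lam ^ 2 :=
  mm_infty_busy_period_variance_general G lam α ρ hlam hα hρ hG
end

section
/- If G(v) = 1 − e^{−v/α} for v ≥ 0 (exponential service times with mean α), then for every integer M ≥ 3, V(G) ≤ (e^{2ρ} − 2ρe^ρ − 1)/λ² + e^ρ α² + (2e^ρ/λ²) [∑_{n=3}^M ρⁿ/(n!(n−1)) + (1/M)(e^ρ − ∑_{n=0}^M ρⁿ/n!)]. (This is the improved upper bound (1.7) for the M/M/∞ busy period variance.) -/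
/-!
For exponential service the integrated tail is `h(t) = α e^{-t/α}`, so expanding
`e^{ρ e^{-t/α}} - 1` as a power series and integrating termwise gives
`∫₀^∞ (e^{λ h(t)} - 1) dt = α ∑_{n ≥ 1} ρⁿ / (n · n!)`, and the variance bound reduces to bounding
`ρ ∑_{n ≥ 1} ρⁿ / (n · n!)`. Its terms are `ρ^{n+1} / (n+1)! · (1 + 1/n)`: for `n < M` they sum
exactly to a partial sum of `e^ρ` plus `ρ²/2 + ∑_{n=3}^M ρⁿ / (n! (n-1))`, and for `n ≥ M` the
factor `1 + 1/n` is at most `1 + 1/M`, which bounds the rest by `(1 + 1/M)` times the tail of the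
exponential series.
-/

open MeasureTheory Real Set Filter

section

open Nat Finset

theorem hasSum_pow_add_div_factorial (x : ℝ) (N : ℕ) :
    HasSum (fun k => x ^ (k + N) / (k + N)!) (exp x - ∑ n ∈ range N, x ^ n / n !) := by
  rw [Real.exp_eq_exp_ℝ]
  exact (hasSum_nat_add_iff' N).2 (NormedSpace.expSeries_div_hasSum_exp x)

theorem integral_Ioi_exp_neg_div {α : ℝ} (hα : 0 < α) (t : ℝ) :
    ∫ v in Ioi t, exp (-v / α) = α * exp (-t / α) := by
  have h (v : ℝ) : -v / α = -α⁻¹ * v := by ring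
  simp only [h]
  rw [integral_exp_mul_Ioi (neg_lt_zero.2 (inv_pos.2 hα))]
  field_simp

theorem integrableOn_Ioi_exp_neg_div {α : ℝ} (hα : 0 < α) (t : ℝ) :
    IntegrableOn (fun v => exp (-v / α)) (Ioi t) := by
  have h (v : ℝ) : -v / α = -α⁻¹ * v := by ring
  simpa only [h] using integrableOn_exp_mul_Ioi (neg_lt_zero.2 (inv_pos.2 hα)) t

theorem summable_pow_div_mul_factorial (x : ℝ) : Summable fun n : ℕ => x ^ n / (n * n !) := by
  refine (Real.summable_pow_div_factorial |x|).of_norm_bounded fun n => ?_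
  rw [mul_comm, ← div_div, norm_div, norm_div, norm_pow, Real.norm_eq_abs, RCLike.norm_natCast,
    RCLike.norm_natCast, div_eq_mul_inv]
  exact mul_le_of_le_one_right (by positivity) (Nat.cast_inv_le_one n)

-- The `n = 0` summand on the right is `1 / 0 = 0`.
theorem integral_Ioi_exp_mul_exp_neg_div_sub_one (c : ℝ) {α : ℝ} (hα : 0 < α) :
    ∫ t in Ioi 0, (exp (c * exp (-t / α)) - 1) = α * ∑' n : ℕ, c ^ n / (n * n !) := by
  have hβ (n : ℕ) : 0 < α / (n + 1) := by positivity
  set F : ℕ → ℝ → ℝ := fun n t => c ^ (n + 1) / (n + 1)! * exp (-t / (α / (n + 1)))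
  have hF (t : ℝ) : HasSum (fun n => F n t) (exp (c * exp (-t / α)) - 1) := by
    convert hasSum_pow_add_div_factorial (c * exp (-t / α)) 1 using 1
    · ext n
      rw [mul_pow, ← exp_nat_mul]
      simp only [F]
      push_cast
      field_simp
    · simp
  have hint (n : ℕ) (a : ℝ) :
      ∫ t in Ioi 0, a * exp (-t / (α / (n + 1))) = α * (a / (n + 1)) := by
    rw [integral_const_mul, integral_Ioi_exp_neg_div (hβ n)]
    simp only [neg_zero, zero_div, exp_zero]
    ring
  have hnorm : Summable fun n => ∫ t in Ioi 0, ‖F n t‖ := by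
    refine (((summable_nat_add_iff 1).2 (summable_pow_div_mul_factorial |c|)).mul_left α).congr
      fun n => ?_
    simp only [F, norm_mul, Real.norm_of_nonneg (exp_pos _).le, hint, norm_div, norm_pow,
      Real.norm_eq_abs, RCLike.norm_natCast]
    push_cast
    field_simp
  have hsum := hasSum_integral_of_summable_integral_norm
    (fun n => (integrableOn_Ioi_exp_neg_div (hβ n) 0).const_mul _) hnorm
  simp only [hint] at hsum
  rw [funext fun t => (hF t).tsum_eq.symm]
  have h := (hasSum_nat_add_iff' 1 (f := fun n : ℕ => α * (c ^ n / (n * n !)))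
    (g := ∫ t in Ioi 0, ∑' n, F n t)).1 (by
      convert hsum using 2 with n
      · push_cast
        field_simp
      · simp [F])
  rw [← tsum_mul_left, h.tsum_eq]

theorem pow_succ_div_mul_factorial (x : ℝ) {m : ℕ} (hm : m ≠ 0) :
    x ^ (m + 1) / (m * m !) = x ^ (m + 1) / (m + 1)! + x ^ (m + 1) / ((m + 1)! * m) := by
  rw [factorial_succ]
  push_cast
  field_simp

theorem sum_range_pow_succ_div_mul_factorial (x : ℝ) {M : ℕ} (hM : 2 ≤ M) :
    ∑ n ∈ range M, x ^ (n + 1) / (n * n !) =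
      (∑ n ∈ range (M + 1), x ^ n / n !) - 1 - x + x ^ 2 / 2
        + ∑ n ∈ Icc 3 M, x ^ n / (n ! * ((n : ℝ) - 1)) := by
  induction M, hM using Nat.le_induction with
  | base => norm_num [sum_range_succ]; ring
  | succ M hM ih =>
    rw [sum_range_succ, ih, sum_range_succ _ (M + 1), sum_Icc_succ_top (show 3 ≤ M + 1 by omega),
      pow_succ_div_mul_factorial x (by omega)]
    push_cast
    ring

theorem tsum_pow_succ_div_mul_factorial_nat_add_le {x : ℝ} (hx : 0 ≤ x) {M : ℕ} (hM : 1 ≤ M) :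
    ∑' k : ℕ, x ^ (k + M + 1) / ((k + M : ℕ) * (k + M)!) ≤
      (1 + 1 / M) * (exp x - ∑ n ∈ range (M + 1), x ^ n / n !) := by
  have hexp : HasSum (fun k => x ^ (k + M + 1) / (k + M + 1)!)
      (exp x - ∑ n ∈ range (M + 1), x ^ n / n !) :=
    hasSum_pow_add_div_factorial x (M + 1)
  have hle (k : ℕ) : x ^ (k + M + 1) / ((k + M : ℕ) * (k + M)!) ≤
      (1 + 1 / M) * (x ^ (k + M + 1) / (k + M + 1)!) := by
    rw [pow_succ_div_mul_factorial x (by omega), ← div_div, add_mul, one_mul, one_div_mul_eq_div]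
    gcongr
    exact_mod_cast Nat.le_add_left M k
  have hs := hexp.summable.mul_left (1 + 1 / M : ℝ)
  calc _ ≤ ∑' k : ℕ, (1 + 1 / M) * (x ^ (k + M + 1) / (k + M + 1)!) :=
        (hs.of_nonneg_of_le (fun k => by positivity) hle).tsum_le_tsum hle hs
    _ = _ := by rw [tsum_mul_left, hexp.tsum_eq]

theorem mul_tsum_pow_div_mul_factorial_le {x : ℝ} (hx : 0 ≤ x) {M : ℕ} (hM : 2 ≤ M) :
    x * ∑' n : ℕ, x ^ n / (n * n !) ≤
      exp x - 1 - x + x ^ 2 / 2 + ∑ n ∈ Icc 3 M, x ^ n / (n ! * ((n : ℝ) - 1))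
        + 1 / M * (exp x - ∑ n ∈ range (M + 1), x ^ n / n !) := by
  have hterm (n : ℕ) : x * (x ^ n / (n * n !)) = x ^ (n + 1) / (n * n !) := by ring
  have hs := ((summable_pow_div_mul_factorial x).mul_left x).congr hterm
  rw [← tsum_mul_left, tsum_congr hterm, ← hs.sum_add_tsum_nat_add M,
    sum_range_pow_succ_div_mul_factorial x hM]
  have := tsum_pow_succ_div_mul_factorial_nat_add_le hx (M := M) (by omega)
  linarith

end

theorem mm_infty_busy_period_variance_improved_upper_bound_general
    (G : ℝ → ℝ)
    (lam α ρ : ℝ)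
    (hlam : 0 < lam)
    (hα : 0 < α)
    (hρ : ρ = lam * α)
    (hG : ∀ v : ℝ, 0 ≤ v → G v = 1 - exp (-v / α))
    (M : ℕ) (hM : 3 ≤ M) :
    (2 * exp ρ / lam) * (∫ t in Ioi (0:ℝ), (exp (lam * ∫ v in Ioi t, (1 - G v)) - 1))
        - ((exp ρ - 1) / lam) ^ 2
      ≤ (exp (2 * ρ) - 2 * ρ * exp ρ - 1) / lam ^ 2 + exp ρ * α ^ 2
        + (2 * exp ρ / lam ^ 2)
          * ((∑ n ∈ Finset.Icc 3 M, ρ ^ n / ((Nat.factorial n) * ((n : ℝ) - 1)))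
            + (1 / (M : ℝ))
              * (exp ρ - ∑ n ∈ Finset.range (M + 1), ρ ^ n / (Nat.factorial n))) := by
  have htail (t : ℝ) (ht : 0 < t) : ∫ v in Ioi t, (1 - G v) = α * exp (-t / α) := by
    rw [← integral_Ioi_exp_neg_div hα t]
    refine setIntegral_congr_fun measurableSet_Ioi fun v hv => ?_
    rw [hG v (ht.trans hv).le, sub_sub_cancel]
  have hI : ∫ t in Ioi (0:ℝ), (exp (lam * ∫ v in Ioi t, (1 - G v)) - 1)
      = α * ∑' n : ℕ, ρ ^ n / (n * n.factorial) := by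
    rw [← integral_Ioi_exp_mul_exp_neg_div_sub_one ρ hα]
    refine setIntegral_congr_fun measurableSet_Ioi fun t ht => ?_
    rw [htail t ht, hρ, mul_assoc]
  have hD := mul_tsum_pow_div_mul_factorial_le (x := ρ) (by rw [hρ]; positivity) (M := M) (by omega)
  have hexp2 : exp (2 * ρ) = exp ρ * exp ρ := by rw [two_mul, exp_add]
  obtain rfl : α = ρ / lam := by rw [hρ]; field_simp
  rw [hI, hexp2]
  linear_combination (2 * exp ρ / lam ^ 2) * hD

/-- The improved upper bound (1.7) for the M/M/∞ busy period variance: for exponential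
service times with mean `α` and any integer `M ≥ 3`,
`V(G) ≤ (e^{2ρ} - 2ρe^ρ - 1)/λ² + e^ρ α² + (2e^ρ/λ²)[∑_{n=3}^M ρⁿ/(n!(n-1)) + (1/M)(e^ρ - ∑_{n=0}^M ρⁿ/n!)]`. -/
theorem mm_infty_busy_period_variance_improved_upper_bound
    (G : ℝ → ℝ)
    (lam α ρ : ℝ)
    (hlam : 0 < lam)
    (hα : 0 < α)
    (hρ : ρ = lam * α)
    (hG : ∀ v : ℝ, 0 ≤ v → G v = 1 - exp (-v / α))
    (hGneg : ∀ v : ℝ, v < 0 → G v = 0)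
    (M : ℕ) (hM : 3 ≤ M) :
    (2 * exp ρ / lam) * (∫ t in Ioi (0:ℝ), (exp (lam * ∫ v in Ioi t, (1 - G v)) - 1))
        - ((exp ρ - 1) / lam) ^ 2
      ≤ (exp (2 * ρ) - 2 * ρ * exp ρ - 1) / lam ^ 2 + exp ρ * α ^ 2
        + (2 * exp ρ / lam ^ 2)
          * ((∑ n ∈ Finset.Icc 3 M, ρ ^ n / ((Nat.factorial n) * ((n : ℝ) - 1)))
            + (1 / (M : ℝ))
              * (exp ρ - ∑ n ∈ Finset.range (M + 1), ρ ^ n / (Nat.factorial n))) :=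
  mm_infty_busy_period_variance_improved_upper_bound_general G lam α ρ hlam hα hρ hG M hM
end

section
/- Let G₁ and G₂ be cumulative distribution functions of nonnegative random variables with equal finite means ∫₀^∞ (1 − G₁(v)) dv = ∫₀^∞ (1 − G₂(v)) dv = α > 0. If G₁ ≤_V G₂, i.e. ∫_t^∞ (1 − G₁(v)) dv ≤ ∫_t^∞ (1 − G₂(v)) dv for all t ≥ 0, then V(G₁) ≤ V(G₂). (Variability ordering of service times implies ordering of the M/G/∞ busy period variances; Section 2.) -/
open MeasureTheory Real Set Filter

/-- Variability ordering of service times implies ordering of the M/G/∞ busy period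
variances: if `G₁ ≤_V G₂` (equal means and ordered integrated tails) then `V(G₁) ≤ V(G₂)`. -/
theorem variability_order_implies_variance_order
    (G₁ G₂ : ℝ → ℝ)
    (hmono₁ : Monotone G₁) (hmono₂ : Monotone G₂)
    (hrc₁ : ∀ v : ℝ, ContinuousWithinAt G₁ (Set.Ici v) v)
    (hrc₂ : ∀ v : ℝ, ContinuousWithinAt G₂ (Set.Ici v) v)
    (hneg₁ : ∀ v : ℝ, v < 0 → G₁ v = 0) (hneg₂ : ∀ v : ℝ, v < 0 → G₂ v = 0)
    (hlim₁ : Tendsto G₁ atTop (nhds 1)) (hlim₂ : Tendsto G₂ atTop (nhds 1))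
    (lam α ρ : ℝ)
    (hlam : 0 < lam)
    (hInt₁ : IntegrableOn (fun v => 1 - G₁ v) (Ioi 0))
    (hInt₂ : IntegrableOn (fun v => 1 - G₂ v) (Ioi 0))
    (hα₁ : α = ∫ v in Ioi (0:ℝ), (1 - G₁ v))
    (hα₂ : α = ∫ v in Ioi (0:ℝ), (1 - G₂ v))
    (hαpos : 0 < α)
    (hρ : ρ = lam * α)
    (horder : ∀ t : ℝ, 0 ≤ t →
      (∫ v in Ioi t, (1 - G₁ v)) ≤ ∫ v in Ioi t, (1 - G₂ v))
    (hfin : IntegrableOn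
      (fun t => exp (lam * ∫ v in Ioi t, (1 - G₂ v)) - 1) (Ioi 0)) :
    (2 * exp ρ / lam) * (∫ t in Ioi (0:ℝ), (exp (lam * ∫ v in Ioi t, (1 - G₁ v)) - 1))
        - ((exp ρ - 1) / lam) ^ 2
      ≤ (2 * exp ρ / lam) * (∫ t in Ioi (0:ℝ), (exp (lam * ∫ v in Ioi t, (1 - G₂ v)) - 1))
        - ((exp ρ - 1) / lam) ^ 2 := by

  -- G₁ ≤ 1 everywhere
  have hle₁ : ∀ v : ℝ, G₁ v ≤ 1 := fun v =>
    ge_of_tendsto hlim₁ ((eventually_ge_atTop v).mono fun u hu => hmono₁ hu)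
  have hnn₁ : ∀ v : ℝ, 0 ≤ 1 - G₁ v := fun v => by linarith [hle₁ v]
  set h₁ : ℝ → ℝ := fun t => ∫ v in Ioi t, (1 - G₁ v) with hh₁
  set h₂ : ℝ → ℝ := fun t => ∫ v in Ioi t, (1 - G₂ v) with hh₂
  have h₁nonneg : ∀ t : ℝ, 0 ≤ h₁ t := fun t =>
    setIntegral_nonneg measurableSet_Ioi (fun v _ => hnn₁ v)
  have hanti : AntitoneOn h₁ (Ici (0:ℝ)) := by
    intro s hs t ht hst
    exact setIntegral_mono_set (hInt₁.mono_set (Ioi_subset_Ioi hs))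
      (Eventually.of_forall fun v => hnn₁ v)
      ((Ioi_subset_Ioi hst).eventuallyLE)
  have hanti' : Antitone (fun t : ℝ => h₁ (max t 0)) := fun s t hst =>
    hanti (mem_Ici.2 (le_max_right s 0)) (mem_Ici.2 (le_max_right t 0))
      (max_le_max hst le_rfl)
  have hmeas : Measurable (fun t : ℝ => exp (lam * h₁ (max t 0)) - 1) :=
    ((measurable_const.mul hanti'.measurable).exp).sub measurable_const
  have haesm : AEStronglyMeasurable (fun t => exp (lam * h₁ t) - 1)
      ((volume : Measure ℝ).restrict (Ioi 0)) := by
    refine hmeas.aestronglyMeasurable.congr ?_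
    filter_upwards [ae_restrict_mem measurableSet_Ioi] with t ht
    rw [max_eq_left ht.le]
  -- pointwise ordering on Ioi 0
  have hpt : ∀ t ∈ Ioi (0:ℝ),
      exp (lam * h₁ t) - 1 ≤ exp (lam * h₂ t) - 1 := by
    intro t ht
    have := horder t ht.le
    have : lam * h₁ t ≤ lam * h₂ t := mul_le_mul_of_nonneg_left this hlam.le
    linarith [exp_le_exp.2 this]
  have hint₁ : IntegrableOn (fun t => exp (lam * h₁ t) - 1) (Ioi 0) := by
    refine hfin.mono' haesm ?_
    filter_upwards [ae_restrict_mem measurableSet_Ioi] with t ht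
    have h0 : (0:ℝ) ≤ exp (lam * h₁ t) - 1 := by
      have : (0:ℝ) ≤ lam * h₁ t := mul_nonneg hlam.le (h₁nonneg t)
      have := one_le_exp this
      linarith
    rw [Real.norm_eq_abs, abs_of_nonneg h0]
    exact hpt t ht
  have key : (∫ t in Ioi (0:ℝ), (exp (lam * h₁ t) - 1))
      ≤ ∫ t in Ioi (0:ℝ), (exp (lam * h₂ t) - 1) :=
    setIntegral_mono_on hint₁ hfin measurableSet_Ioi hpt
  have hc : (0:ℝ) ≤ 2 * exp ρ / lam := by positivity
  exact sub_le_sub_right (mul_le_mul_of_nonneg_left key hc) _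
end

section
/- If G is NBUE with mean α, i.e. ∫₀^∞ (1 − G(v)) dv = α and ∫_t^∞ (1 − G(v)) dv ≤ α(1 − G(t)) for all t ≥ 0, then ∫_t^∞ (1 − G(v)) dv ≤ α e^{−t/α} for all t ≥ 0. (An NBUE service time distribution is dominated in the variability order by the exponential distribution with the same mean.) -/
/-!
Write `H t = ∫_t^∞ (1 - G)`. Since `1 - G` is nonincreasing, `H x ≥ H (x + h) + h (1 - G (x + h))`,
and the NBUE bound `H (x + h) ≤ α (1 - G (x + h))` turns this into `H (x + h) (1 + h / α) ≤ H x`.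
Iterating over `n` steps of length `t / n` gives `H t (1 + t / (n α))ⁿ ≤ H 0 = α`, and letting
`n → ∞` yields `H t e^{t/α} ≤ α`.
-/

open MeasureTheory Real Set Filter

theorem mul_one_add_mul_pow_le_of_step {H : ℝ → ℝ} {c h : ℝ} (hc : 0 ≤ c) (hh : 0 ≤ h)
    (hstep : ∀ x, 0 ≤ x → H (x + h) * (1 + c * h) ≤ H x) (n : ℕ) :
    H (n * h) * (1 + c * h) ^ n ≤ H 0 := by
  induction n with
  | zero => simp
  | succ n ih =>
    calc H ((n + 1 : ℕ) * h) * (1 + c * h) ^ (n + 1)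
        = H (n * h + h) * (1 + c * h) * (1 + c * h) ^ n := by push_cast; ring_nf
      _ ≤ H (n * h) * (1 + c * h) ^ n := by
        gcongr
        exact hstep _ (by positivity)
      _ ≤ H 0 := ih

theorem le_mul_exp_of_step {H : ℝ → ℝ} {c : ℝ} (hc : 0 ≤ c)
    (hstep : ∀ x h, 0 ≤ x → 0 ≤ h → H (x + h) * (1 + c * h) ≤ H x) {t : ℝ} (ht : 0 ≤ t) :
    H t ≤ H 0 * exp (-(c * t)) := by
  have hpow : Tendsto (fun n : ℕ => H t * (1 + c * t / n) ^ n) atTop (nhds (H t * exp (c * t))) :=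
    (tendsto_one_add_div_pow_exp (c * t)).const_mul (H t)
  have hbound : ∀ n : ℕ, 0 < n → H t * (1 + c * t / n) ^ n ≤ H 0 := by
    intro n hn
    have hsplit : (n : ℝ) * (t / n) = t := by field_simp
    have := mul_one_add_mul_pow_le_of_step (h := t / n) hc (by positivity)
      (fun x hx => hstep x _ hx (by positivity)) n
    rwa [hsplit, ← mul_div_assoc] at this
  rw [exp_neg, ← div_eq_mul_inv, le_div_iff₀ (exp_pos _)]
  exact le_of_tendsto hpow (eventually_gt_atTop 0 |>.mono hbound)

theorem setIntegral_Ioi_add_add_mul_le {f : ℝ → ℝ} (hf : Antitone f) {x h : ℝ}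
    (hint : IntegrableOn f (Ioi x)) (hh : 0 ≤ h) :
    (∫ v in Ioi (x + h), f v) + h * f (x + h) ≤ ∫ v in Ioi x, f v := by
  have hIoc : IntegrableOn f (Ioc x (x + h)) := hint.mono_set Ioc_subset_Ioi_self
  have hsplit : ∫ v in Ioi x, f v = (∫ v in Ioc x (x + h), f v) + ∫ v in Ioi (x + h), f v := by
    rw [← setIntegral_union (Ioc_disjoint_Ioi le_rfl) measurableSet_Ioi hIoc
      (hint.mono_set (Ioi_subset_Ioi (by linarith))), Ioc_union_Ioi_eq_Ioi (by linarith)]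
  have hlow : h * f (x + h) ≤ ∫ v in Ioc x (x + h), f v := by
    have := setIntegral_ge_of_const_le measurableSet_Ioc measure_Ioc_lt_top.ne
      (fun v hv => hf hv.2) hIoc
    simpa [measureReal_def, Real.volume_Ioc, hh] using this
  linarith

theorem setIntegral_Ioi_le_mul_exp_of_le_mul {f : ℝ → ℝ} {α : ℝ} (hf : Antitone f)
    (hint : IntegrableOn f (Ioi 0)) (hα : 0 < α)
    (hdom : ∀ t, 0 ≤ t → ∫ v in Ioi t, f v ≤ α * f t) {t : ℝ} (ht : 0 ≤ t) :
    ∫ v in Ioi t, f v ≤ (∫ v in Ioi 0, f v) * exp (-t / α) := by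
  have hstep : ∀ x h, 0 ≤ x → 0 ≤ h →
      (∫ v in Ioi (x + h), f v) * (1 + α⁻¹ * h) ≤ ∫ v in Ioi x, f v := by
    intro x h hx hh
    have hdrop := setIntegral_Ioi_add_add_mul_le hf (hint.mono_set (Ioi_subset_Ioi hx)) hh
    have htail : (∫ v in Ioi (x + h), f v) * (α⁻¹ * h) ≤ h * f (x + h) := by
      calc (∫ v in Ioi (x + h), f v) * (α⁻¹ * h) = α⁻¹ * (∫ v in Ioi (x + h), f v) * h := by ring
        _ ≤ f (x + h) * h := by
          gcongr
          exact (inv_mul_le_iff₀ hα).2 (hdom _ (by positivity))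
        _ = h * f (x + h) := mul_comm _ _
    linarith
  simpa [neg_div, div_eq_inv_mul] using
    le_mul_exp_of_step (H := fun s => ∫ v in Ioi s, f v) (inv_nonneg.2 hα.le) hstep ht

theorem nbue_integrated_tail_le_exponential_general
    (G : ℝ → ℝ)
    (hmono : Monotone G)
    (α : ℝ)
    (hInt : IntegrableOn (fun v => 1 - G v) (Ioi 0))
    (hα : α = ∫ v in Ioi (0:ℝ), (1 - G v))
    (hαpos : 0 < α)
    (hNBUE : ∀ t : ℝ, 0 ≤ t → (∫ v in Ioi t, (1 - G v)) ≤ α * (1 - G t)) :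
    ∀ t : ℝ, 0 ≤ t → (∫ v in Ioi t, (1 - G v)) ≤ α * exp (-t / α) := by
  intro t ht
  have hanti : Antitone fun v => 1 - G v := fun a b hab => sub_le_sub_left (hmono hab) 1
  have := setIntegral_Ioi_le_mul_exp_of_le_mul hanti hInt hαpos hNBUE ht
  rwa [← hα] at this

/-- An NBUE distribution is dominated in the variability order by the exponential
distribution with the same mean: if `∫_t^∞ (1-G) ≤ α(1 - G(t))` for all `t ≥ 0`,
then `∫_t^∞ (1-G) ≤ α e^{-t/α}` for all `t ≥ 0`. -/
theorem nbue_integrated_tail_le_exponential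
    (G : ℝ → ℝ)
    (hmono : Monotone G)
    (hrc : ∀ v : ℝ, ContinuousWithinAt G (Set.Ici v) v)
    (hneg : ∀ v : ℝ, v < 0 → G v = 0)
    (hlim : Tendsto G atTop (nhds 1))
    (α : ℝ)
    (hInt : IntegrableOn (fun v => 1 - G v) (Ioi 0))
    (hα : α = ∫ v in Ioi (0:ℝ), (1 - G v))
    (hαpos : 0 < α)
    (hNBUE : ∀ t : ℝ, 0 ≤ t → (∫ v in Ioi t, (1 - G v)) ≤ α * (1 - G t)) :
    ∀ t : ℝ, 0 ≤ t → (∫ v in Ioi t, (1 - G v)) ≤ α * exp (-t / α) :=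
  nbue_integrated_tail_le_exponential_general G hmono α hInt hα hαpos hNBUE
end

section
/- If G is NWUE with mean α, i.e. ∫₀^∞ (1 − G(v)) dv = α and ∫_t^∞ (1 − G(v)) dv ≥ α(1 − G(t)) for all t ≥ 0, then ∫_t^∞ (1 − G(v)) dv ≥ α e^{−t/α} for all t ≥ 0. (An NWUE service time distribution dominates in the variability order the exponential distribution with the same mean.) -/
open MeasureTheory Real Set Filter

/-!
Write `H t = ∫_t^∞ (1 - G)`. By right-continuity of `G`, `H` has right derivative `-(1 - G t)`,
and the NWUE inequality says exactly that this is `≥ -H t / α`. The lower Grönwall inequality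
then gives `H t ≥ H 0 · e^{-t/α} = α e^{-t/α}`.
-/

theorem mul_exp_le_of_mul_le_deriv_right {H H' : ℝ → ℝ} {a b K : ℝ}
    (hH : ContinuousOn H (Icc a b)) (hH' : ∀ x ∈ Ico a b, HasDerivWithinAt H (H' x) (Ici x) x)
    (bound : ∀ x ∈ Ico a b, K * H x ≤ H' x) :
    ∀ x ∈ Icc a b, H a * exp (K * (x - a)) ≤ H x := by
  intro x hx
  have hgronwall := le_gronwallBound_of_liminf_deriv_right_le (f := -H) (f' := -H')
    (δ := -H a) (K := K) (ε := 0) hH.neg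
    (fun y hy r hr => by simpa only [slope_def_field, div_eq_inv_mul] using
      ((hH' y hy).neg.liminf_right_slope_le hr)) le_rfl
    (fun y hy => by simp only [Pi.neg_apply]; linarith [bound y hy]) x hx
  rw [gronwallBound_ε0, Pi.neg_apply] at hgronwall
  linarith

variable {E : Type*} [NormedAddCommGroup E] [NormedSpace ℝ E] [CompleteSpace E]

theorem MeasureTheory.IntegrableOn.hasDerivWithinAt_integral_Ioi {f : ℝ → E} {a x : ℝ}
    (hf : IntegrableOn f (Ioi a)) (hax : a ≤ x) (hx : ContinuousWithinAt f (Ici x) x) :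
    HasDerivWithinAt (fun y => ∫ v in Ioi y, f v) (-f x) (Ici x) x := by
  have hprimitive : HasDerivWithinAt (fun y => ∫ v in a..y, f v) (f x) (Ici x) x :=
    intervalIntegral.integral_hasDerivWithinAt_right (t := Ioi x)
      ((intervalIntegrable_iff_integrableOn_Ioc_of_le hax).2 (hf.mono_set Ioc_subset_Ioi_self))
      (AEStronglyMeasurable.stronglyMeasurableAtFilter_of_mem
        (hf.mono_set (Ioi_subset_Ioi hax)).aestronglyMeasurable self_mem_nhdsWithin)
      (hx.mono Ioi_subset_Ici_self)
  have htail : ∀ y, a ≤ y → ∫ v in Ioi y, f v = (∫ v in Ioi a, f v) - ∫ v in a..y, f v :=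
    fun y hy => by rw [← intervalIntegral.integral_Ioi_sub_Ioi hf hy, sub_sub_cancel]
  simpa using ((hasDerivWithinAt_const x _ _).sub hprimitive).congr
    (fun y hy => htail y (hax.trans hy)) (htail x hax)

theorem integral_Ioi_mul_exp_le_of_mul_le_integral_Ioi {f : ℝ → ℝ} {a t α : ℝ}
    (hf : IntegrableOn f (Ioi a)) (hrc : ∀ x, a ≤ x → ContinuousWithinAt f (Ici x) x)
    (hα : 0 < α) (hle : ∀ x, a ≤ x → α * f x ≤ ∫ v in Ioi x, f v) (hat : a ≤ t) :
    (∫ v in Ioi a, f v) * exp (-(t - a) / α) ≤ ∫ v in Ioi t, f v := by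
  have key := mul_exp_le_of_mul_le_deriv_right (H := fun y => ∫ v in Ioi y, f v)
    (K := -α⁻¹) (b := t) (hf.continuousOn_Ici_primitive_Ioi.mono Icc_subset_Ici_self)
    (fun x hx => hf.hasDerivWithinAt_integral_Ioi hx.1 (hrc x hx.1))
    (fun x hx => by
      rw [neg_mul, neg_le_neg_iff, le_inv_mul_iff₀ hα]
      exact hle x hx.1) t ⟨hat, le_rfl⟩
  simpa only [neg_mul, neg_div, inv_mul_eq_div] using key

theorem nwue_integrated_tail_ge_exponential_general
    (G : ℝ → ℝ)
    (hrc : ∀ v : ℝ, ContinuousWithinAt G (Set.Ici v) v)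
    (α : ℝ)
    (hInt : IntegrableOn (fun v => 1 - G v) (Ioi 0))
    (hα : α = ∫ v in Ioi (0:ℝ), (1 - G v))
    (hαpos : 0 < α)
    (hNWUE : ∀ t : ℝ, 0 ≤ t → α * (1 - G t) ≤ ∫ v in Ioi t, (1 - G v)) :
    ∀ t : ℝ, 0 ≤ t → α * exp (-t / α) ≤ ∫ v in Ioi t, (1 - G v) := by
  intro t ht
  have hbound := integral_Ioi_mul_exp_le_of_mul_le_integral_Ioi hInt
    (fun x _ => continuousWithinAt_const.sub (hrc x)) hαpos hNWUE ht
  rwa [← hα, sub_zero] at hbound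

/-- An NWUE distribution dominates in the variability order the exponential
distribution with the same mean: if `∫_t^∞ (1-G) ≥ α(1 - G(t))` for all `t ≥ 0`,
then `∫_t^∞ (1-G) ≥ α e^{-t/α}` for all `t ≥ 0`. -/
theorem nwue_integrated_tail_ge_exponential
    (G : ℝ → ℝ)
    (hmono : Monotone G)
    (hrc : ∀ v : ℝ, ContinuousWithinAt G (Set.Ici v) v)
    (hneg : ∀ v : ℝ, v < 0 → G v = 0)
    (hlim : Tendsto G atTop (nhds 1))
    (α : ℝ)
    (hInt : IntegrableOn (fun v => 1 - G v) (Ioi 0))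
    (hα : α = ∫ v in Ioi (0:ℝ), (1 - G v))
    (hαpos : 0 < α)
    (hNWUE : ∀ t : ℝ, 0 ≤ t → α * (1 - G t) ≤ ∫ v in Ioi t, (1 - G v)) :
    ∀ t : ℝ, 0 ≤ t → α * exp (-t / α) ≤ ∫ v in Ioi t, (1 - G v) :=
  nwue_integrated_tail_ge_exponential_general G hrc α hInt hα hαpos hNWUE
end

section
/- If G is the distribution function of the constant service time α, i.e. G(v) = 0 for v < α and G(v) = 1 for v ≥ α, so that h(t) = max(α − t, 0), then V(G) = (e^{2ρ} − 2ρe^ρ − 1)/λ². (The M/D/∞ busy period variance, with which both bounds of formula (1.3) coincide when γ_s = 0.) -/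
open MeasureTheory Real Set Filter

/-! For deterministic service the integrated tail is `h(t) = (α - t)⁺`, so `e^{λ h(t)} - 1`
vanishes for `t ≥ α` and the integral in `V(G)` reduces to the elementary
`∫₀^α (e^{λ(α - t)} - 1) dt = (e^ρ - 1)/λ - α`; the rest is algebra. -/

lemma integral_Ioi_one_sub_step (α t : ℝ) :
    ∫ v in Ioi t, (1 - if v < α then (0 : ℝ) else 1) = max (α - t) 0 := by
  have hstep : (fun v : ℝ => 1 - if v < α then (0 : ℝ) else 1) = (Iio α).indicator 1 := by
    funext v
    by_cases hv : v < α <;> simp [hv]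
  rw [hstep, setIntegral_indicator measurableSet_Iio, Ioi_inter_Iio]
  simp

lemma integral_exp_mul_sub (c α : ℝ) (hc : c ≠ 0) :
    ∫ t in (0 : ℝ)..α, exp (c * (α - t)) = (exp (c * α) - 1) / c := by
  rw [intervalIntegral.integral_comp_sub_left (fun x => exp (c * x)) α,
    intervalIntegral.integral_comp_mul_left (fun x => exp x) hc, integral_exp]
  simp [div_eq_inv_mul]

lemma integral_Ioi_exp_mul_max_sub_sub_one (c α : ℝ) (hc : c ≠ 0) (hα : 0 ≤ α) :
    ∫ t in Ioi (0 : ℝ), (exp (c * max (α - t) 0) - 1) = (exp (c * α) - 1) / c - α := by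
  have hvanish : ∀ t ∈ Ioi (0 : ℝ) \ Ioc 0 α, exp (c * max (α - t) 0) - 1 = 0 := by
    rintro t ⟨ht, htα⟩
    have hαt : α < t := by simp_all
    simp [max_eq_right (sub_nonpos.mpr hαt.le)]
  have hpos : ∀ t ∈ Ioc (0 : ℝ) α,
      exp (c * max (α - t) 0) - 1 = exp (c * (α - t)) - 1 := by
    rintro t ⟨-, htα⟩
    rw [max_eq_left (sub_nonneg.mpr htα)]
  rw [setIntegral_eq_of_subset_of_forall_sdiff_eq_zero measurableSet_Ioi Ioc_subset_Ioi_self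
      hvanish, setIntegral_congr_fun measurableSet_Ioc hpos,
    ← intervalIntegral.integral_of_le hα, intervalIntegral.integral_sub
      ((by fun_prop : Continuous fun t => exp (c * (α - t))).intervalIntegrable _ _)
      intervalIntegrable_const, integral_exp_mul_sub c α hc]
  simp

/-- The M/D/∞ busy period variance: for the constant service time `α`
(`G(v) = 0` for `v < α`, `G(v) = 1` for `v ≥ α`), `V(G) = (e^{2ρ} - 2ρe^ρ - 1)/λ²`. -/
theorem md_infty_busy_period_variance
    (G : ℝ → ℝ)
    (lam α ρ : ℝ)
    (hlam : 0 < lam)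
    (hα : 0 < α)
    (hρ : ρ = lam * α)
    (hG : ∀ v : ℝ, G v = if v < α then 0 else 1) :
    (2 * exp ρ / lam) * (∫ t in Ioi (0:ℝ), (exp (lam * ∫ v in Ioi t, (1 - G v)) - 1))
        - ((exp ρ - 1) / lam) ^ 2
      = (exp (2 * ρ) - 2 * ρ * exp ρ - 1) / lam ^ 2 := by
  simp_rw [hG, integral_Ioi_one_sub_step]
  rw [integral_Ioi_exp_mul_max_sub_sub_one lam α hlam.ne' hα.le, ← hρ,
    show exp (2 * ρ) = exp ρ ^ 2 by rw [← exp_nat_mul]; norm_num, hρ]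
  field_simp
  ring
end
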